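/- For t > 0 and k ≥ 0, the generalized Hermite polynomials R_n(t,·) on ℝ (the Z₂ Appell characters) are orthogonal with respect to the measure dP_t(x) = (Γ(k+1/2)⁻¹/(4t)^{k+1/2}) |x|^{2k} e^{-x²/4t} dx: for m ≠ n, ∫_ℝ R_m(t,x) R_n(t,x) |x|^{2k} e^{-x²/4t} dx = 0. -/

import Mathlib

open MeasureTheory

/-- Generalized binomial coefficient `binom(a, m)` for real `a`. -/
noncomputable def genChoose (a : ℝ) (m : ℕ) : ℝ :=
  (∏ i ∈ Finset.range m, (a - i)) / (m.factorial : ℝ)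

/-- Laguerre polynomial `L_n^{(α)}(x) = Σ_{j=0}^n binom(n+α, n-j) (-x)^j / j!`. -/
noncomputable def Lag (α : ℝ) (n : ℕ) (x : ℝ) : ℝ :=
  ∑ j ∈ Finset.range (n + 1), genChoose ((n : ℝ) + α) (n - j) * (-x) ^ j / (j.factorial : ℝ)

/-- The generalized Hermite polynomials (the `ℤ₂` Appell characters):
`R_{2n}(t,x) = (-1)^n 2^{2n} n! t^n L_n^{(k-1/2)}(x²/4t)`,
`R_{2n+1}(t,x) = (-1)^n 2^{2n+1} n! t^n x L_n^{(k+1/2)}(x²/4t)`. -/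
noncomputable def RHerm (k : ℝ) (n : ℕ) (t x : ℝ) : ℝ :=
  if Even n then
    (-1 : ℝ) ^ (n / 2) * 2 ^ n * ((n / 2).factorial : ℝ) * t ^ (n / 2) *
      Lag (k - 1/2) (n / 2) (x ^ 2 / (4 * t))
  else
    (-1 : ℝ) ^ (n / 2) * 2 ^ n * ((n / 2).factorial : ℝ) * t ^ (n / 2) * x *
      Lag (k + 1/2) (n / 2) (x ^ 2 / (4 * t))

open Finset Polynomial in
lemma fwdDiff_iter_zero' (n : ℕ) : (fwdDiff (1:ℝ))^[n] (fun _ : ℝ => (0:ℝ)) = fun _ => 0 := by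
  induction n with
  | zero => rfl
  | succ n ih =>
    rw [Function.iterate_succ_apply]
    have : fwdDiff (1:ℝ) (fun _ : ℝ => (0:ℝ)) = fun _ : ℝ => (0:ℝ) := by
      funext y; simp [fwdDiff]
    rw [this, ih]

open Polynomial in
lemma fwdDiff_iter_poly : ∀ (n : ℕ) (p : Polynomial ℝ), p.natDegree < n →
    (fwdDiff (1:ℝ))^[n] (fun y : ℝ => p.eval y) = fun _ => 0 := by
  intro n
  induction n with
  | zero => intro p hp; omega
  | succ n ih =>
    intro p hp
    set q : Polynomial ℝ := p.comp (X + C 1) - p with hq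
    have hΔ : fwdDiff (1:ℝ) (fun y : ℝ => p.eval y) = fun y : ℝ => q.eval y := by
      funext y
      simp [fwdDiff, hq, Polynomial.eval_comp]
    rw [Function.iterate_succ_apply, hΔ]
    by_cases hq0 : q = 0
    · rw [hq0]; simpa using fwdDiff_iter_zero' n
    · apply ih
      have hp0 : p ≠ 0 := by
        rintro rfl; simp [hq] at hq0
      have hnd : (p.comp (X + C 1)).natDegree = p.natDegree := by
        rw [natDegree_comp, natDegree_X_add_C, mul_one]
      have hlc : (p.comp (X + C 1)).leadingCoeff = p.leadingCoeff := by
        rw [leadingCoeff_comp (by rw [natDegree_X_add_C]; exact one_ne_zero),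
          leadingCoeff_X_add_C, one_pow, mul_one]
      have hcomp_ne : p.comp (X + C 1) ≠ 0 := by
        intro h
        apply hp0
        rw [← leadingCoeff_eq_zero, ← hlc, h, leadingCoeff_zero]
      have hdeg : q.degree < p.degree := by
        have h1 := degree_sub_lt
          (by rw [degree_eq_natDegree hcomp_ne, degree_eq_natDegree hp0, hnd]) hcomp_ne hlc
        rw [degree_eq_natDegree hcomp_ne, hnd, ← degree_eq_natDegree hp0] at h1
        exact h1
      have := Polynomial.natDegree_lt_natDegree hq0 hdeg
      omega

open Finset in
lemma alt_sum_eval (n : ℕ) (p : Polynomial ℝ) (h : p.natDegree < n) :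
    ∑ i ∈ Finset.range (n+1), (-1:ℝ)^i * (n.choose i : ℝ) * p.eval (i:ℝ) = 0 := by
  have H := fwdDiff_iter_eq_sum_shift (1:ℝ) (fun y : ℝ => p.eval y) n 0
  rw [congrFun (fwdDiff_iter_poly n p h) 0] at H
  have H2 : ∑ i ∈ Finset.range (n+1), (-1:ℝ)^(n-i) * (n.choose i : ℝ) * p.eval (i:ℝ) = 0 := by
    rw [eq_comm] at H
    convert H using 2 with i hi
    push_cast
    rw [zsmul_eq_mul]
    push_cast
    rw [zero_add, nsmul_eq_mul, mul_one]
  have : ∑ i ∈ Finset.range (n+1), (-1:ℝ)^i * (n.choose i : ℝ) * p.eval (i:ℝ)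
      = (-1:ℝ)^n * ∑ i ∈ Finset.range (n+1), (-1:ℝ)^(n-i) * (n.choose i : ℝ) * p.eval (i:ℝ) := by
    rw [Finset.mul_sum]
    apply Finset.sum_congr rfl
    intro i hi
    have hin : i ≤ n := Nat.lt_succ_iff.mp (Finset.mem_range.mp hi)
    have h1 : (-1:ℝ)^(n-i) * (-1)^i = (-1)^n := by rw [← pow_add, Nat.sub_add_cancel hin]
    have h2 : ((-1:ℝ)^(n-i))^2 = 1 := by
      rw [← pow_mul, mul_comm, pow_mul, neg_one_sq, one_pow]
    have key : (-1:ℝ)^i = (-1)^n * (-1)^(n - i) := by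
      calc (-1:ℝ)^i = ((-1)^(n-i))^2 * (-1)^i := by rw [h2, one_mul]
      _ = (-1)^n * (-1)^(n-i) := by rw [← h1]; ring
    rw [key]; ring
  rw [this, H2, mul_zero]

lemma Gamma_add_nat (x : ℝ) (hx : 0 < x) (m : ℕ) :
    Real.Gamma (x + m) = Real.Gamma x * ∏ r ∈ Finset.range m, (x + r) := by
  induction m with
  | zero => simp
  | succ m ih =>
    have h1 : x + ((m:ℕ)+1 : ℕ) = (x + m) + 1 := by push_cast; ring
    rw [h1, Real.Gamma_add_one (by positivity), ih, Finset.prod_range_succ]; ring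

lemma prod_desc (α : ℝ) (m c : ℕ) :
    ∏ s ∈ Finset.range m, (α + (c:ℝ) + (m:ℝ) - (s:ℝ)) = ∏ s ∈ Finset.range m, (α + c + 1 + s) := by
  rw [← Finset.prod_range_reflect (fun s : ℕ => α + c + 1 + s) m]
  apply Finset.prod_congr rfl
  intro s hs
  have hsm : s < m := Finset.mem_range.mp hs
  have h : ((m - 1 - s : ℕ) : ℝ) = (m:ℝ) - 1 - s := by
    rw [Nat.sub_sub]
    rw [Nat.cast_sub (by omega : 1 + s ≤ m)]
    push_cast; ring
  simp only [h]
  ring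

lemma key_sum (α : ℝ) (hα : 0 < α + 1) (n j : ℕ) (hj : j < n) :
    ∑ i ∈ Finset.range (n+1),
      (-1:ℝ)^i * genChoose ((n:ℝ)+α) (n-i) * Real.Gamma ((i:ℝ) + j + α + 1) / (i.factorial : ℝ) = 0 := by
  classical
  set P : Polynomial ℝ := ∏ s ∈ Finset.range j, (Polynomial.X + Polynomial.C (α + 1 + s)) with hP
  have hPdeg : P.natDegree = j := by
    rw [hP, Polynomial.natDegree_prod _ _ (fun s _ => Polynomial.X_add_C_ne_zero _)]
    simp only [Polynomial.natDegree_X_add_C, Finset.sum_const, Finset.card_range, smul_eq_mul,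
      mul_one]
  have halt := alt_sum_eval n P (by rw [hPdeg]; exact hj)
  have hPeval : ∀ i : ℕ, P.eval (i:ℝ) = ∏ s ∈ Finset.range j, (α + 1 + (i:ℝ) + s) := by
    intro i
    rw [hP, Polynomial.eval_prod]
    apply Finset.prod_congr rfl
    intro s _
    simp only [Polynomial.eval_add, Polynomial.eval_X, Polynomial.eval_C]
    ring
  have hterm : ∀ i ∈ Finset.range (n+1),
      (-1:ℝ)^i * genChoose ((n:ℝ)+α) (n-i) * Real.Gamma ((i:ℝ) + j + α + 1) / (i.factorial : ℝ)
      = (Real.Gamma (α+1) * (∏ r ∈ Finset.range n, (α + 1 + r)) / (n.factorial : ℝ))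
        * ((-1:ℝ)^i * (n.choose i : ℝ) * P.eval (i:ℝ)) := by
    intro i hi
    have hin : i ≤ n := Nat.lt_succ_iff.mp (Finset.mem_range.mp hi)
    have hGamma : Real.Gamma ((i:ℝ) + j + α + 1)
        = Real.Gamma (α+1) * ∏ r ∈ Finset.range (i+j), (α + 1 + r) := by
      have h := Gamma_add_nat (α+1) hα (i+j)
      rw [show (α+1) + ((i+j:ℕ):ℝ) = (i:ℝ) + j + α + 1 by push_cast; ring] at h
      exact h
    have hgen : genChoose ((n:ℝ)+α) (n-i)
        = (∏ s ∈ Finset.range (n-i), (α + (i:ℝ) + 1 + s)) / (((n-i).factorial : ℝ)) := by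
      rw [genChoose]
      congr 1
      have h1 : ∀ s ∈ Finset.range (n-i), ((n:ℝ)+α - s) = α + (i:ℝ) + ((n-i:ℕ):ℝ) - s := by
        intro s _
        rw [Nat.cast_sub hin]; ring
      rw [Finset.prod_congr rfl h1, prod_desc α (n-i) i]
    have hsplit2 : ∏ r ∈ Finset.range (i+j), (α + 1 + (r:ℝ))
        = (∏ r ∈ Finset.range i, (α + 1 + (r:ℝ))) * ∏ s ∈ Finset.range j, (α + 1 + (i:ℝ) + s) := by
      rw [Finset.prod_range_add]
      congr 1
      apply Finset.prod_congr rfl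
      intro s _; push_cast; ring
    have hsplit1 : ∏ r ∈ Finset.range n, (α + 1 + (r:ℝ))
        = (∏ r ∈ Finset.range i, (α + 1 + (r:ℝ))) * ∏ s ∈ Finset.range (n-i), (α + (i:ℝ) + 1 + s) := by
      have h2 := Finset.prod_range_add (fun r : ℕ => α + 1 + (r:ℝ)) i (n-i)
      rw [Nat.add_sub_cancel' hin] at h2
      rw [h2]
      congr 1
      apply Finset.prod_congr rfl
      intro s _; push_cast; ring
    have hprod : (∏ s ∈ Finset.range (n-i), (α + (i:ℝ) + 1 + s)) * ∏ r ∈ Finset.range (i+j), (α + 1 + (r:ℝ))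
        = (∏ r ∈ Finset.range n, (α + 1 + (r:ℝ))) * P.eval (i:ℝ) := by
      rw [hsplit2, hsplit1, hPeval]
      ring
    have hfn : ((n.factorial : ℕ) : ℝ)
        = (n.choose i : ℝ) * (i.factorial : ℝ) * (((n-i).factorial : ℕ) : ℝ) := by
      exact_mod_cast congrArg (Nat.cast (R := ℝ))
        (Nat.choose_mul_factorial_mul_factorial hin).symm
    rw [hGamma, hgen]
    have hne1 : ((i.factorial : ℕ) : ℝ) ≠ 0 := Nat.cast_ne_zero.mpr i.factorial_ne_zero
    have hne2 : (((n-i).factorial : ℕ) : ℝ) ≠ 0 := Nat.cast_ne_zero.mpr (n-i).factorial_ne_zero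
    have hne3 : ((n.factorial : ℕ) : ℝ) ≠ 0 := Nat.cast_ne_zero.mpr n.factorial_ne_zero
    field_simp
    rw [hfn]
    linear_combination (n.choose i : ℝ) * (i.factorial : ℝ)
      * (((n-i).factorial : ℕ) : ℝ) * hprod
  rw [Finset.sum_congr rfl hterm, ← Finset.mul_sum, halt, mul_zero]

open Set Real in
lemma moment_integrable (q t : ℝ) (hq : -1 < q) (ht : 0 < t) :
    Integrable (fun x : ℝ => |x| ^ q * Real.exp (-x^2/(4*t))) := by
  have hb : 0 < (4*t)⁻¹ := by positivity
  have h1 : IntegrableOn (fun x : ℝ => |x| ^ q * Real.exp (-x^2/(4*t))) (Set.Ioi 0) := by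
    apply (integrableOn_rpow_mul_exp_neg_mul_sq hb hq).congr_fun ?_ measurableSet_Ioi
    intro x hx
    dsimp only
    rw [abs_of_pos hx]
    congr 1
    ring
  have h2 : IntegrableOn (fun x : ℝ => |x| ^ q * Real.exp (-x^2/(4*t))) (Set.Iic 0) := by
    rw [← Measure.map_neg_eq_self (volume : Measure ℝ)]
    have m : MeasurableEmbedding fun x : ℝ => -x := (Homeomorph.neg ℝ).measurableEmbedding
    rw [m.integrableOn_map_iff]
    simp_rw [Function.comp_def, abs_neg, neg_sq, neg_preimage, neg_Iic, neg_zero]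
    exact Iff.mpr integrableOn_Ici_iff_integrableOn_Ioi h1
  rw [← integrableOn_univ, ← Set.Iic_union_Ioi (a := (0:ℝ)), integrableOn_union]
  exact ⟨h2, h1⟩

open Set Real in
lemma moment_eq (q t : ℝ) (hq : -1 < q) (ht : 0 < t) :
    ∫ x : ℝ, |x| ^ q * Real.exp (-x^2/(4*t)) = (4*t) ^ ((q+1)/2) * Real.Gamma ((q+1)/2) := by
  have hb : 0 < (4*t)⁻¹ := by positivity
  have h4t : (0:ℝ) < 4*t := by linarith
  have hstep : (fun x : ℝ => |x| ^ q * Real.exp (-x^2/(4*t)))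
      = fun x : ℝ => (fun y : ℝ => y ^ q * Real.exp (-(4*t)⁻¹ * y^2)) |x| := by
    funext x
    simp only [sq_abs]
    congr 1
    ring
  rw [hstep, integral_comp_abs (f := fun y : ℝ => y ^ q * Real.exp (-(4*t)⁻¹ * y^2))]
  have hIoi : ∫ y in Ioi (0:ℝ), y ^ q * Real.exp (-(4*t)⁻¹ * y^2)
      = ((4*t)⁻¹) ^ (-(q+1)/2) * (1/2) * Real.Gamma ((q+1)/2) := by
    have h := integral_rpow_mul_exp_neg_mul_rpow (p := 2) (q := q) (b := (4*t)⁻¹)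
      (by norm_num) hq hb
    rw [← h]
    apply setIntegral_congr_fun measurableSet_Ioi
    intro y hy
    dsimp only
    rw [show ((2:ℝ):ℝ) = ((2:ℕ):ℝ) by norm_num, Real.rpow_natCast]
  rw [hIoi]
  have hinv : ((4*t)⁻¹ : ℝ) ^ (-(q+1)/2) = (4*t) ^ ((q+1)/2) := by
    rw [Real.inv_rpow h4t.le, ← Real.rpow_neg h4t.le, neg_div, neg_neg]
  rw [hinv]; ring

open Set Real in
lemma Lag_orth (k t : ℝ) (hk : 0 ≤ k) (ht : 0 < t) (d a b : ℕ) (α : ℝ)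
    (hαdef : α = k + d - 1/2) (hba : b < a) :
    ∫ x : ℝ, Lag α a (x^2/(4*t)) * Lag α b (x^2/(4*t)) * x ^ (2*d) * |x| ^ (2*k)
      * Real.exp (-x^2/(4*t)) = 0 := by
  have h4t : (0:ℝ) < 4*t := by linarith
  have hα1 : 0 < α + 1 := by
    have hd : (0:ℝ) ≤ d := Nat.cast_nonneg d
    rw [hαdef]; linarith
  set C : ℕ → ℕ → ℝ := fun i j =>
    genChoose ((a:ℝ)+α) (a-i) * genChoose ((b:ℝ)+α) (b-j) * (-1:ℝ)^(i+j)
      / ((i.factorial : ℝ) * (j.factorial : ℝ) * (4*t)^(i+j)) with hC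
  set Q : ℕ → ℕ → ℝ := fun i j => 2*k + 2*(d:ℝ) + 2*(i:ℝ) + 2*(j:ℝ) with hQdef
  have hq : ∀ i j : ℕ, (-1:ℝ) < Q i j := by
    intro i j
    have h1 : (0:ℝ) ≤ d := Nat.cast_nonneg d
    have h2 : (0:ℝ) ≤ i := Nat.cast_nonneg i
    have h3 : (0:ℝ) ≤ j := Nat.cast_nonneg j
    simp only [hQdef]
    linarith
  have h0 : ∀ᵐ x : ℝ, x ≠ (0:ℝ) := by
    have hz : (volume : Measure ℝ) {(0:ℝ)} = 0 := Real.volume_singleton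
    filter_upwards [measure_eq_zero_iff_ae_notMem.mp hz] with x hx
    simpa using hx
  have hae : (fun x : ℝ => Lag α a (x^2/(4*t)) * Lag α b (x^2/(4*t)) * x ^ (2*d) * |x| ^ (2*k)
        * Real.exp (-x^2/(4*t)))
      =ᵐ[volume] fun x : ℝ => ∑ j ∈ Finset.range (b+1), ∑ i ∈ Finset.range (a+1),
        C i j * (|x| ^ (Q i j) * Real.exp (-x^2/(4*t))) := by
    filter_upwards [h0] with x hx
    have hxpos : 0 < |x| := abs_pos.mpr hx
    have epow : ∀ m : ℕ, |x| ^ (2*(m:ℝ)) = x^(2*m) := by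
      intro m
      rw [show (2*(m:ℝ)) = ((2*m : ℕ):ℝ) by push_cast; ring, Real.rpow_natCast,
        pow_mul, sq_abs, ← pow_mul]
    have esplit : ∀ i j : ℕ, |x| ^ (Q i j)
        = |x|^(2*k) * (|x|^(2*(d:ℝ)) * (|x|^(2*(i:ℝ)) * |x|^(2*(j:ℝ)))) := by
      intro i j
      rw [← Real.rpow_add hxpos, ← Real.rpow_add hxpos, ← Real.rpow_add hxpos]
      congr 1
      simp only [hQdef]
      ring
    rw [Lag, Lag, Finset.sum_mul_sum]
    simp only [Finset.sum_mul]
    rw [Finset.sum_comm]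
    apply Finset.sum_congr rfl
    intro j hj
    apply Finset.sum_congr rfl
    intro i hi
    rw [esplit i j, epow d, epow i, epow j, hC]
    have hne1 : ((i.factorial : ℕ) : ℝ) ≠ 0 := Nat.cast_ne_zero.mpr i.factorial_ne_zero
    have hne2 : ((j.factorial : ℕ) : ℝ) ≠ 0 := Nat.cast_ne_zero.mpr j.factorial_ne_zero
    have h4ne : ((4*t) : ℝ) ≠ 0 := ne_of_gt h4t
    field_simp
    have e1 : t ^ i * t⁻¹ ^ i = 1 := by rw [← mul_pow, mul_inv_cancel₀ ht.ne', one_pow]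
    have e2 : t ^ j * t⁻¹ ^ j = 1 := by rw [← mul_pow, mul_inv_cancel₀ ht.ne', one_pow]
    have e3 : (-1/4:ℝ) ^ i * 4 ^ i = (-1) ^ i := by rw [← mul_pow]; norm_num
    have e4 : (-1/4:ℝ) ^ j * 4 ^ j = (-1) ^ j := by rw [← mul_pow]; norm_num
    set G := genChoose ((a:ℝ) + α) (a - i) * x ^ (i * 2) * x ^ (j * 2) * genChoose ((b:ℝ) + α) (b - j)
    linear_combination G * (t ^ j * t⁻¹ ^ j) * ((-1/4:ℝ) ^ i * 4 ^ i) * ((-1/4:ℝ) ^ j * 4 ^ j) * e1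
      + G * ((-1/4:ℝ) ^ i * 4 ^ i) * ((-1/4:ℝ) ^ j * 4 ^ j) * e2
      + G * ((-1/4:ℝ) ^ j * 4 ^ j) * e3 + G * (-1:ℝ) ^ i * e4
  rw [integral_congr_ae hae]
  have hint : ∀ j i : ℕ, Integrable (fun x : ℝ => C i j * (|x| ^ (Q i j) * Real.exp (-x^2/(4*t)))) :=
    fun j i => (moment_integrable (Q i j) t (hq i j) ht).const_mul _
  rw [integral_finset_sum _ (fun j _ => integrable_finset_sum _ (fun i _ => hint j i))]
  apply Finset.sum_eq_zero
  intro j hj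
  rw [integral_finset_sum _ (fun i _ => hint j i)]
  have hval : ∀ i ∈ Finset.range (a+1), ∫ x : ℝ, C i j * (|x| ^ (Q i j) * Real.exp (-x^2/(4*t)))
      = (genChoose ((b:ℝ)+α) (b-j) * (-1:ℝ)^j / (j.factorial : ℝ) * (4*t)^(α+1))
        * ((-1:ℝ)^i * genChoose ((a:ℝ)+α) (a-i) * Real.Gamma ((i:ℝ)+j+α+1) / (i.factorial : ℝ)) := by
    intro i _
    rw [MeasureTheory.integral_const_mul, moment_eq (Q i j) t (hq i j) ht]
    have hexp : (Q i j + 1)/2 = (i:ℝ) + j + α + 1 := by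
      simp only [hQdef, hαdef]; ring
    rw [hexp]
    have hrpow : (4*t) ^ ((i:ℝ) + j + α + 1) = ((4*t)^(i+j : ℕ) : ℝ) * (4*t) ^ (α+1) := by
      rw [show (i:ℝ)+j+α+1 = ((i+j : ℕ):ℝ) + (α+1) by push_cast; ring, Real.rpow_add h4t,
        Real.rpow_natCast]
    rw [hrpow, hC]
    have h4ne : (((4*t):ℝ)^(i+j:ℕ)) ≠ 0 := pow_ne_zero _ (ne_of_gt h4t)
    have hne1 : ((i.factorial : ℕ) : ℝ) ≠ 0 := Nat.cast_ne_zero.mpr i.factorial_ne_zero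
    have hne2 : ((j.factorial : ℕ) : ℝ) ≠ 0 := Nat.cast_ne_zero.mpr j.factorial_ne_zero
    field_simp
    ring
  rw [Finset.sum_congr rfl hval, ← Finset.mul_sum,
    key_sum α hα1 a j (lt_of_le_of_lt (Nat.lt_succ_iff.mp (Finset.mem_range.mp hj)) hba),
    mul_zero]

lemma Lag_orth' (k t : ℝ) (hk : 0 ≤ k) (ht : 0 < t) (d a b : ℕ) (α : ℝ)
    (hαdef : α = k + d - 1/2) (hab : a ≠ b) :
    ∫ x : ℝ, Lag α a (x^2/(4*t)) * Lag α b (x^2/(4*t)) * x ^ (2*d) * |x| ^ (2*k)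
      * Real.exp (-x^2/(4*t)) = 0 := by
  rcases lt_or_gt_of_ne hab with h | h
  · rw [show (fun x : ℝ => Lag α a (x^2/(4*t)) * Lag α b (x^2/(4*t)) * x ^ (2*d) * |x| ^ (2*k)
        * Real.exp (-x^2/(4*t)))
      = fun x : ℝ => Lag α b (x^2/(4*t)) * Lag α a (x^2/(4*t)) * x ^ (2*d) * |x| ^ (2*k)
        * Real.exp (-x^2/(4*t)) from funext fun x => by ring]
    exact Lag_orth k t hk ht d b a α hαdef h
  · exact Lag_orth k t hk ht d a b α hαdef h

lemma RHerm_neg (k : ℝ) (n : ℕ) (t x : ℝ) : RHerm k n t (-x) = (-1:ℝ)^n * RHerm k n t x := by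
  rw [RHerm, RHerm]
  by_cases h : Even n
  · simp only [if_pos h, neg_sq, h.neg_one_pow, one_mul]
  · simp only [if_neg h, neg_sq]
    rw [Odd.neg_one_pow (Nat.not_even_iff_odd.mp h)]
    ring

/-- Orthogonality of the generalized Hermite polynomials with respect to the `k`-Gaussian
measure `|x|^{2k} e^{-x²/4t} dx` on `ℝ`. -/
theorem RHerm_orthogonal (k : ℝ) (hk : 0 ≤ k) (t : ℝ) (ht : 0 < t)
    (m n : ℕ) (hmn : m ≠ n) :
    ∫ x : ℝ, RHerm k m t x * RHerm k n t x * |x| ^ (2 * k) * Real.exp (-x ^ 2 / (4 * t)) = 0 := by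
  by_cases hpar : Even (m + n)
  · -- same parity
    rcases Nat.even_or_odd m with hm | hm
    · have hn : Even n := (Nat.even_add.mp hpar).mp hm
      have hab : m / 2 ≠ n / 2 := by
        have h1 := Nat.even_iff.mp hm
        have h2 := Nat.even_iff.mp hn
        omega
      have hfun : (fun x : ℝ => RHerm k m t x * RHerm k n t x * |x| ^ (2*k)
            * Real.exp (-x^2/(4*t)))
          = fun x : ℝ => ((-1:ℝ)^(m/2) * 2^m * ((m/2).factorial:ℝ) * t^(m/2)
              * ((-1:ℝ)^(n/2) * 2^n * ((n/2).factorial:ℝ) * t^(n/2)))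
            * (Lag (k - 1/2) (m/2) (x^2/(4*t)) * Lag (k - 1/2) (n/2) (x^2/(4*t)) * x^(2*0)
              * |x|^(2*k) * Real.exp (-x^2/(4*t))) := by
        funext x
        rw [RHerm, if_pos hm, RHerm, if_pos hn]
        ring
      rw [hfun, MeasureTheory.integral_const_mul,
        Lag_orth' k t hk ht 0 (m/2) (n/2) (k - 1/2) (by push_cast; ring) hab, mul_zero]
    · have hn : Odd n := by
        rcases Nat.even_or_odd n with h | h
        · exact absurd ((Nat.even_add.mp hpar).mpr h) (Nat.not_even_iff_odd.mpr hm)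
        · exact h
      have hab : m / 2 ≠ n / 2 := by
        have h1 := Nat.odd_iff.mp hm
        have h2 := Nat.odd_iff.mp hn
        omega
      have hfun : (fun x : ℝ => RHerm k m t x * RHerm k n t x * |x| ^ (2*k)
            * Real.exp (-x^2/(4*t)))
          = fun x : ℝ => ((-1:ℝ)^(m/2) * 2^m * ((m/2).factorial:ℝ) * t^(m/2)
              * ((-1:ℝ)^(n/2) * 2^n * ((n/2).factorial:ℝ) * t^(n/2)))
            * (Lag (k + 1/2) (m/2) (x^2/(4*t)) * Lag (k + 1/2) (n/2) (x^2/(4*t)) * x^(2*1)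
              * |x|^(2*k) * Real.exp (-x^2/(4*t))) := by
        funext x
        rw [RHerm, if_neg (Nat.not_even_iff_odd.mpr hm), RHerm,
          if_neg (Nat.not_even_iff_odd.mpr hn)]
        ring
      rw [hfun, MeasureTheory.integral_const_mul,
        Lag_orth' k t hk ht 1 (m/2) (n/2) (k + 1/2) (by push_cast; ring) hab, mul_zero]
  · -- opposite parity : integrand is odd
    set f : ℝ → ℝ := fun x => RHerm k m t x * RHerm k n t x * |x| ^ (2 * k)
      * Real.exp (-x ^ 2 / (4 * t)) with hf
    have hodd : ∀ x : ℝ, f (-x) = - f x := by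
      intro x
      simp only [hf]
      rw [RHerm_neg, RHerm_neg, abs_neg, neg_sq]
      have h1 : (-1:ℝ)^m * (-1:ℝ)^n = -1 := by
        rw [← pow_add]
        exact Odd.neg_one_pow (Nat.not_even_iff_odd.mp hpar)
      linear_combination (RHerm k m t x * RHerm k n t x * |x| ^ (2 * k)
        * Real.exp (-x ^ 2 / (4 * t))) * h1
    have h1 : ∫ x : ℝ, f (-x) = ∫ x : ℝ, f x := integral_neg_eq_self f volume
    have h2 : ∫ x : ℝ, f (-x) = - ∫ x : ℝ, f x := by
      rw [show (fun x : ℝ => f (-x)) = fun x => - f x from funext hodd, integral_neg]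
    have := h1.symm.trans h2
    linarith [this]
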